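/- In the setting of deterministic SignGD on an L_q-smooth function lower bounded by f_*, choosing γ = (1/d^{1/q})·√(2/(T L_q)) yields: min_{1≤t≤T}‖∇f(x_t)‖_1 ≤ d^{1/q}·√(L_q/(2T))·(f(x_1) - f_* + 1). -/

import Mathlib

/-- The ℓ_p norm on `ℝ^d` (for finite `p ≥ 1`). -/
noncomputable def lpNorm {d : ℕ} (p : ℝ) (x : Fin d → ℝ) : ℝ :=
  (∑ j, |x j| ^ p) ^ (1 / p)

lemma lpNorm_nonneg {d : ℕ} {p : ℝ} (x : Fin d → ℝ) : 0 ≤ lpNorm p x :=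
  Real.rpow_nonneg (Finset.sum_nonneg fun j _ => Real.rpow_nonneg (abs_nonneg _) _) _

lemma holder {d : ℕ} {p q : ℝ} (hpq : Real.HolderConjugate p q) (a b : Fin d → ℝ) :
    ∑ j, a j * b j ≤ lpNorm p a * lpNorm q b :=
  Real.inner_le_Lp_mul_Lq Finset.univ a b hpq

lemma holder_abs {d : ℕ} {p q : ℝ} (hpq : Real.HolderConjugate p q) (a b : Fin d → ℝ) :
    |∑ j, a j * b j| ≤ lpNorm p a * lpNorm q b := by
  rw [abs_le]
  constructor
  · have h := holder hpq (fun j => -a j) b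
    have he : lpNorm p (fun j => -a j) = lpNorm p a := by simp [lpNorm]
    rw [he] at h
    simp only [neg_mul] at h
    rw [Finset.sum_neg_distrib] at h
    linarith
  · exact holder hpq a b

lemma lpNorm_smul {d : ℕ} {q : ℝ} (hq : 0 < q) (s : ℝ) (v : Fin d → ℝ) :
    lpNorm q (fun j => s * v j) = |s| * lpNorm q v := by
  unfold lpNorm
  have h1 : ∀ j : Fin d, |s * v j| ^ q = |s| ^ q * |v j| ^ q := fun j => by
    rw [abs_mul, Real.mul_rpow (abs_nonneg _) (abs_nonneg _)]
  simp_rw [h1, ← Finset.mul_sum]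
  rw [Real.mul_rpow (Real.rpow_nonneg (abs_nonneg _) _)
    (Finset.sum_nonneg fun j _ => Real.rpow_nonneg (abs_nonneg _) _)]
  rw [← Real.rpow_mul (abs_nonneg s), mul_one_div_cancel hq.ne', Real.rpow_one]

example : True := trivial

lemma inner_eq_sum {d : ℕ} (a b : EuclideanSpace ℝ (Fin d)) :
    (inner ℝ a b : ℝ) = ∑ j, a j * b j := by
  simp [PiLp.inner_apply, RCLike.inner_apply, mul_comm]

lemma descent {d : ℕ} {p q L : ℝ} (hpq : Real.HolderConjugate p q) (hq0 : 0 < q) (hL : 0 ≤ L)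
    (f : EuclideanSpace ℝ (Fin d) → ℝ) (g : EuclideanSpace ℝ (Fin d) → EuclideanSpace ℝ (Fin d))
    (hdiff : ∀ x, HasGradientAt f (g x) x)
    (hlip : ∀ x y, lpNorm p (g x - g y) ≤ L * lpNorm q (x - y))
    (x v : EuclideanSpace ℝ (Fin d)) :
    f (x + v) ≤ f x + (∑ j, g x j * v j) + L / 2 * (lpNorm q v) ^ 2 := by
  set c : ℝ → EuclideanSpace ℝ (Fin d) := fun s => x + s • v with hc
  set h : ℝ → ℝ := fun s => (inner ℝ (g (c s)) v : ℝ) with hh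
  set K : ℝ := L * lpNorm q v * lpNorm q v with hK
  have hKnn : 0 ≤ K := by
    have := lpNorm_nonneg (p := q) v; positivity
  have hderiv : ∀ s : ℝ, HasDerivAt (fun t : ℝ => f (c t)) (h s) s := by
    intro s
    have hcd : HasDerivAt c v s := by
      rw [hc]; simpa using ((hasDerivAt_id s).smul_const v).const_add x
    have := (hdiff (c s)).hasFDerivAt.comp_hasDerivAt s hcd
    exact this
  have hlipH : ∀ s t : ℝ, |h s - h t| ≤ K * |s - t| := by
    intro s t
    have hst : h s - h t = ∑ j, (g (c s) j - g (c t) j) * v j := by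
      rw [hh]
      simp only [inner_eq_sum, ← Finset.sum_sub_distrib, sub_mul]
    rw [hst]
    calc |∑ j, (g (c s) j - g (c t) j) * v j|
        ≤ lpNorm p (g (c s) - g (c t)) * lpNorm q v := holder_abs hpq _ _
      _ ≤ (L * lpNorm q (c s - c t)) * lpNorm q v := by
          exact mul_le_mul_of_nonneg_right (hlip _ _) (lpNorm_nonneg v)
      _ = K * |s - t| := by
          have hd : c s - c t = (s - t) • v := by
            rw [hc]; simp; module
          rw [hd]
          have : lpNorm q ((s - t) • v) = |s - t| * lpNorm q v :=
            lpNorm_smul hq0 (s - t) v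
          rw [this, hK]; ring
  have hcont : Continuous h := by
    refine LipschitzWith.continuous (K := K.toNNReal) ?_
    refine LipschitzWith.of_dist_le_mul fun s t => ?_
    rw [Real.dist_eq, Real.dist_eq, Real.coe_toNNReal _ hKnn]
    exact hlipH s t
  have hInt : IntervalIntegrable h MeasureTheory.volume 0 1 :=
    hcont.intervalIntegrable 0 1
  have key : ∫ s in (0:ℝ)..1, h s = f (c 1) - f (c 0) :=
    intervalIntegral.integral_eq_sub_of_hasDerivAt (fun s _ => hderiv s) hInt
  have hb : ∀ s ∈ Set.Icc (0:ℝ) 1, h s ≤ h 0 + K * s := by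
    intro s hs
    have h1 := hlipH s 0
    have h2 : h s - h 0 ≤ |h s - h 0| := le_abs_self _
    have h3 : |s - 0| = s := by rw [sub_zero, abs_of_nonneg hs.1]
    rw [h3] at h1
    linarith
  have hmono : ∫ s in (0:ℝ)..1, h s ≤ ∫ s in (0:ℝ)..1, (h 0 + K * s) := by
    refine intervalIntegral.integral_mono_on zero_le_one hInt ?_ hb
    exact (continuous_const.add (continuous_const.mul continuous_id)).intervalIntegrable 0 1
  have hval : ∫ s in (0:ℝ)..1, (h 0 + K * s) = h 0 + K / 2 := by
    have h1 : IntervalIntegrable (fun s : ℝ => K * s) MeasureTheory.volume 0 1 :=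
      (continuous_const.mul continuous_id).intervalIntegrable 0 1
    rw [intervalIntegral.integral_add intervalIntegrable_const h1,
      intervalIntegral.integral_const, intervalIntegral.integral_const_mul, integral_id]
    norm_num
    ring
  have hc1 : c 1 = x + v := by rw [hc]; simp
  have hc0 : c 0 = x := by rw [hc]; simp
  have hh0 : h 0 = ∑ j, g x j * v j := by rw [hh]; simp [hc0, inner_eq_sum]
  rw [hc1, hc0] at key
  have : f (x + v) - f x ≤ h 0 + K / 2 := by rw [← key]; linarith [hmono, hval.le]
  rw [hh0] at this
  have hKval : K / 2 = L / 2 * lpNorm q v ^ 2 := by rw [hK]; ring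
  linarith [this, hKval.le]

lemma real_sign_mul_self (y : ℝ) : y * Real.sign y = |y| := by
  rcases lt_trichotomy y 0 with h | h | h
  · rw [Real.sign_of_neg h, abs_of_neg h]; ring
  · simp [h]
  · rw [Real.sign_of_pos h, abs_of_pos h]; ring

lemma abs_sign_le_one (y : ℝ) : |Real.sign y| ≤ 1 := by
  rcases lt_trichotomy y 0 with h | h | h <;>
    simp [Real.sign_of_neg, Real.sign_of_pos, h]

lemma lpNorm_one_eq {d : ℕ} (w : Fin d → ℝ) : lpNorm 1 w = ∑ j, |w j| := by
  simp [lpNorm]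

/-- Deterministic SignGD with step-size `γ = d^{-1/q} √(2/(T L_q))` on an `L_q`-smooth
function lower bounded by `fstar` satisfies
`min_{1 ≤ t ≤ T} ‖∇f(x_t)‖₁ ≤ d^{1/q} √(L_q/(2T)) (f(x_1) - fstar + 1)`. -/
theorem signGD_min_grad_bound {d : ℕ} (hd : 0 < d) (p q L γ : ℝ) (hp : 1 ≤ p)
    (hq : 1 ≤ q) (hpq : 1 / p + 1 / q = 1) (hL : 0 < L)
    (f : EuclideanSpace ℝ (Fin d) → ℝ)
    (g : EuclideanSpace ℝ (Fin d) → EuclideanSpace ℝ (Fin d))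
    (hdiff : ∀ x, HasGradientAt f (g x) x)
    (hlip : ∀ x y, lpNorm p (g x - g y) ≤ L * lpNorm q (x - y))
    (fstar : ℝ) (hlb : ∀ x, fstar ≤ f x)
    (x : ℕ → EuclideanSpace ℝ (Fin d))
    (hrec : ∀ t j, x (t + 1) j = x t j - γ * Real.sign (g (x t) j))
    (T : ℕ) (hT : 1 ≤ T)
    (hγ : γ = (1 / (d : ℝ) ^ (1 / q)) * Real.sqrt (2 / (T * L))) :
    (Finset.Icc 1 T).inf' (Finset.nonempty_Icc.mpr hT) (fun t => lpNorm 1 (g (x t)))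
      ≤ (d : ℝ) ^ (1 / q) * Real.sqrt (L / (2 * T)) * (f (x 1) - fstar + 1) := by
  have hT0 : (0:ℝ) < T := by exact_mod_cast hT
  have hd0 : (0:ℝ) < d := by exact_mod_cast hd
  have hq0 : (0:ℝ) < q := lt_of_lt_of_le one_pos hq
  have hp1 : 1 < p := by
    rcases eq_or_lt_of_le hp with h | h
    · exfalso
      rw [← h] at hpq
      have hq' : 0 < 1/q := by positivity
      norm_num at hpq
      linarith
    · exact h
  have hpq' : Real.HolderConjugate p q := Real.holderConjugate_iff.mpr ⟨hp1, by rw [← one_div, ← one_div]; exact hpq⟩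
  set A : ℝ := (d:ℝ) ^ (1/q) with hA
  have hA0 : 0 < A := Real.rpow_pos_of_pos hd0 _
  set S : ℝ := Real.sqrt (L / (2*(T:ℝ))) with hS
  have hS0 : 0 < S := Real.sqrt_pos.mpr (by positivity)
  have hS2 : S^2 = L/(2*(T:ℝ)) := Real.sq_sqrt (by positivity)
  have hL2 : L = 2*(T:ℝ)*S^2 := by rw [hS2]; field_simp
  have hsq : Real.sqrt (2/((T:ℝ)*L)) * S = 1/(T:ℝ) := by
    rw [hS, ← Real.sqrt_mul (by positivity)]
    rw [show (2/((T:ℝ)*L) * (L/(2*(T:ℝ)))) = (1/(T:ℝ))^2 by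
      field_simp]
    exact Real.sqrt_sq (by positivity)
  have hsqrt : Real.sqrt (2/((T:ℝ)*L)) = 1/((T:ℝ)*S) := by
    rw [eq_div_iff (by positivity : (T:ℝ)*S ≠ 0)]
    rw [show Real.sqrt (2/((T:ℝ)*L)) * ((T:ℝ)*S)
        = (Real.sqrt (2/((T:ℝ)*L)) * S) * (T:ℝ) by ring, hsq]
    field_simp
  have hγ1 : γ = 1/(A*(T:ℝ)*S) := by
    rw [hγ, hsqrt]; field_simp
  have hγ0 : 0 < γ := by rw [hγ1]; positivity
  -- per-step descent bound
  have step : ∀ t : ℕ, γ * lpNorm 1 (g (x t))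
      ≤ f (x t) - f (x (t+1)) + L/2*(γ*A)^2 := by
    intro t
    set v : EuclideanSpace ℝ (Fin d) := x (t+1) - x t with hv
    have hxv : x t + v = x (t+1) := by rw [hv]; abel
    have hvj : ∀ j, v j = -(γ * Real.sign (g (x t) j)) := by
      intro j
      show x (t+1) j - x t j = _
      rw [hrec t j]; ring
    have hinner : (∑ j, g (x t) j * v j) = -(γ * lpNorm 1 (g (x t))) := by
      rw [lpNorm_one_eq]
      have hterm : ∀ j, g (x t) j * v j = -(γ * |g (x t) j|) := fun j => by
        rw [hvj j, ← real_sign_mul_self (g (x t) j)]; ring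
      rw [Finset.sum_congr rfl fun j _ => hterm j, Finset.mul_sum, ← Finset.sum_neg_distrib]
    have hlpv : lpNorm q v ≤ γ * A := by
      have hterm : ∀ j, |v j| ^ q ≤ γ ^ q := by
        intro j
        have h1 : |v j| ≤ γ := by
          rw [hvj j, abs_neg, abs_mul, abs_of_pos hγ0]
          nlinarith [abs_sign_le_one (g (x t) j), abs_nonneg (Real.sign (g (x t) j))]
        exact Real.rpow_le_rpow (abs_nonneg _) h1 hq0.le
      calc lpNorm q v = (∑ j, |v j| ^ q) ^ (1/q) := rfl
        _ ≤ ((d:ℝ) * γ ^ q) ^ (1/q) := by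
            apply Real.rpow_le_rpow
              (Finset.sum_nonneg fun j _ => Real.rpow_nonneg (abs_nonneg _) _) ?_ (by positivity)
            calc ∑ j, |v j| ^ q ≤ ∑ _j : Fin d, γ ^ q :=
                Finset.sum_le_sum fun j _ => hterm j
              _ = (d:ℝ) * γ ^ q := by
                  rw [Finset.sum_const, Finset.card_univ, Fintype.card_fin, nsmul_eq_mul]
        _ = γ * A := by
            rw [Real.mul_rpow hd0.le (Real.rpow_nonneg hγ0.le _),
              ← Real.rpow_mul hγ0.le, mul_one_div_cancel hq0.ne', Real.rpow_one, hA]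
            ring
    have hdes := descent hpq' hq0 hL.le f g hdiff hlip (x t) v
    rw [hxv, hinner] at hdes
    have hsq' : lpNorm q v ^ 2 ≤ (γ*A)^2 := by
      have := lpNorm_nonneg (p := q) v
      nlinarith
    have hmul := mul_le_mul_of_nonneg_left hsq' (by positivity : (0:ℝ) ≤ L/2)
    linarith [hdes, hmul]
  -- min over iterates and telescoping
  set M : ℝ := (Finset.Icc 1 T).inf' (Finset.nonempty_Icc.mpr hT)
    (fun t => lpNorm 1 (g (x t))) with hM
  have hmin : ∀ k ∈ Finset.range T, M ≤ lpNorm 1 (g (x (k+1))) := by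
    intro k hk
    apply Finset.inf'_le
    simp only [Finset.mem_Icc]
    simp only [Finset.mem_range] at hk
    omega
  have hsum : (T:ℝ) * (γ * M) ≤ ∑ k ∈ Finset.range T, γ * lpNorm 1 (g (x (k+1))) := by
    have h := Finset.card_nsmul_le_sum (Finset.range T)
      (fun k => γ * lpNorm 1 (g (x (k+1)))) (γ * M)
      (fun k hk => mul_le_mul_of_nonneg_left (hmin k hk) hγ0.le)
    simpa [nsmul_eq_mul, Finset.card_range] using h
  have htel : ∑ k ∈ Finset.range T, (f (x (k+1)) - f (x (k+2)))
      = f (x 1) - f (x (T+1)) := Finset.sum_range_sub' (fun k => f (x (k+1))) T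
  have hsum2 : ∑ k ∈ Finset.range T, γ * lpNorm 1 (g (x (k+1)))
      ≤ f (x 1) - fstar + (T:ℝ) * (L/2*(γ*A)^2) := by
    calc ∑ k ∈ Finset.range T, γ * lpNorm 1 (g (x (k+1)))
        ≤ ∑ k ∈ Finset.range T, (f (x (k+1)) - f (x (k+2)) + L/2*(γ*A)^2) :=
          Finset.sum_le_sum fun k _ => step (k+1)
      _ = (f (x 1) - f (x (T+1))) + (T:ℝ) * (L/2*(γ*A)^2) := by
          rw [Finset.sum_add_distrib, htel, Finset.sum_const, Finset.card_range,
            nsmul_eq_mul]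
      _ ≤ _ := by linarith [hlb (x (T+1))]
  have hTγ : (T:ℝ) * γ = 1/(A*S) := by
    rw [hγ1]; field_simp
  have hC : (T:ℝ) * (L/2*(γ*A)^2) = 1 := by
    rw [hγ1, hL2]; field_simp
  have hkey : M * (1/(A*S)) ≤ f (x 1) - fstar + 1 := by
    calc M * (1/(A*S)) = (T:ℝ) * (γ * M) := by rw [← hTγ]; ring
      _ ≤ f (x 1) - fstar + (T:ℝ) * (L/2*(γ*A)^2) := le_trans hsum hsum2
      _ = f (x 1) - fstar + 1 := by rw [hC]
  have hAS : 0 < A * S := by positivity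
  rw [show M * (1/(A*S)) = M / (A*S) by ring] at hkey
  have := (div_le_iff₀ hAS).mp hkey
  calc M ≤ (f (x 1) - fstar + 1) * (A*S) := this
    _ = A * S * (f (x 1) - fstar + 1) := by ring
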